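/- Let $\mathcal{D}$ be a dyadic grid in $\mathbb{R}^n$, $p > 1$, $g \in L^p_{loc}$, and $c = 2^{(n+1)/p}$. For $k \in \mathbb{Z}$ let $\mathcal{S}_k$ be a maximal disjoint collection of cubes $Q \in \mathcal{D}$ with $\|g\|_{L^p,Q} > c^k$. Then $\mathcal{S} = \bigcup_k \mathcal{S}_k$ is a sparse family: for each $Q \in \mathcal{S}$, $|\bigcup \{Q' \in \mathcal{S} : Q' \subsetneq Q\}| \leq \tfrac{1}{2}|Q|$. -/
import Mathlib


open MeasureTheory Set ENNReal

noncomputable section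

/-- The standard dyadic cube `2^k([0,1)^n + m)` in `ℝⁿ`. -/
def stdCube (n : ℕ) (k : ℤ) (m : Fin n → ℤ) : Set (Fin n → ℝ) :=
  {x | ∀ i, (2 : ℝ) ^ k * m i ≤ x i ∧ x i < (2 : ℝ) ^ k * (m i + 1)}

/-- The normalized `L^p` average `‖g‖_{L^p,Q} = (⨍_Q |g|^p)^{1/p}` (in `ℝ≥0∞`). -/
def normLp (n : ℕ) (p : ℝ) (g : (Fin n → ℝ) → ℝ) (Q : Set (Fin n → ℝ)) : ℝ≥0∞ :=
  ((volume Q)⁻¹ * ∫⁻ x in Q, ENNReal.ofReal |g x| ^ p) ^ (1 / p)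

lemma stdCube_eq_pi (n : ℕ) (k : ℤ) (m : Fin n → ℤ) :
    stdCube n k m = Set.pi univ (fun i => Ico ((2:ℝ)^k * m i) ((2:ℝ)^k * (m i + 1))) := by
  ext x; simp [stdCube, Set.mem_pi, Ico]

lemma stdCube_nonempty (n : ℕ) (k : ℤ) (m : Fin n → ℤ) : (stdCube n k m).Nonempty := by
  refine ⟨fun i => (2:ℝ)^k * m i, fun i => ⟨le_refl _, ?_⟩⟩
  have h2 : (0:ℝ) < (2:ℝ)^k := zpow_pos (by norm_num) k
  show (2:ℝ)^k * m i < (2:ℝ)^k * (m i + 1)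
  nlinarith

lemma measurableSet_stdCube (n : ℕ) (k : ℤ) (m : Fin n → ℤ) :
    MeasurableSet (stdCube n k m) := by
  rw [stdCube_eq_pi]
  exact MeasurableSet.univ_pi (fun i => measurableSet_Ico)

lemma volume_stdCube (n : ℕ) (k : ℤ) (m : Fin n → ℤ) :
    volume (stdCube n k m) = ENNReal.ofReal ((2:ℝ)^k) ^ n := by
  rw [stdCube_eq_pi, volume_pi_pi]
  have h : ∀ i : Fin n, volume (Ico ((2:ℝ)^k * m i) ((2:ℝ)^k * (m i + 1)))
      = ENNReal.ofReal ((2:ℝ)^k) := by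
    intro i
    rw [Real.volume_Ico]
    ring_nf
  simp [h]

lemma stdCube_subset_of_le (n : ℕ) {k k' : ℤ} (hkk : k ≤ k') {m m' : Fin n → ℤ}
    (h : (stdCube n k m ∩ stdCube n k' m').Nonempty) :
    stdCube n k m ⊆ stdCube n k' m' := by
  obtain ⟨x, hx, hx'⟩ := h
  have h2 : (0:ℝ) < (2:ℝ)^k := zpow_pos (by norm_num) k
  set d : ℕ := (k' - k).toNat with hd
  have hkd : k' = k + (d : ℤ) := by simp only [hd]; omega
  have hD : (2:ℝ)^k' = (2:ℝ)^k * ((2^d : ℤ) : ℝ) := by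
    rw [hkd, zpow_add₀ (by norm_num : (2:ℝ) ≠ 0)]
    push_cast
    rw [zpow_natCast]
  intro y hy i
  obtain ⟨ha, hb⟩ := hx i
  obtain ⟨ha', hb'⟩ := hx' i
  obtain ⟨hya, hyb⟩ := hy i
  have i1 : (2^d : ℤ) * m' i ≤ m i := by
    have h1 : (2:ℝ)^k * (((2^d : ℤ) : ℝ) * (m' i)) < (2:ℝ)^k * ((m i : ℝ) + 1) := by
      rw [← mul_assoc, ← hD]; linarith
    have h3 : (((2^d : ℤ) : ℝ) * (m' i)) < (m i : ℝ) + 1 := lt_of_mul_lt_mul_left h1 h2.le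
    have h4 : ((2^d : ℤ) * m' i : ℤ) < m i + 1 := by exact_mod_cast h3
    omega
  have i2 : m i + 1 ≤ (2^d : ℤ) * (m' i + 1) := by
    have h1 : (2:ℝ)^k * (m i : ℝ) < (2:ℝ)^k * (((2^d : ℤ) : ℝ) * ((m' i : ℝ) + 1)) := by
      rw [← mul_assoc, ← hD]; linarith
    have h3 : (m i : ℝ) < ((2^d : ℤ) : ℝ) * ((m' i : ℝ) + 1) := lt_of_mul_lt_mul_left h1 h2.le
    have h4 : (m i : ℤ) < (2^d : ℤ) * (m' i + 1) := by exact_mod_cast h3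
    omega
  constructor
  · calc (2:ℝ)^k' * m' i = (2:ℝ)^k * (((2^d:ℤ):ℝ) * m' i) := by rw [hD]; ring
    _ ≤ (2:ℝ)^k * (m i) := by
        have h5 : (((2^d:ℤ) * m' i : ℤ) : ℝ) ≤ ((m i : ℤ) : ℝ) := by exact_mod_cast i1
        push_cast at h5 ⊢
        nlinarith [mul_le_mul_of_nonneg_left h5 h2.le]
    _ ≤ y i := hya
  · calc y i < (2:ℝ)^k * (m i + 1) := hyb
    _ ≤ (2:ℝ)^k' * (m' i + 1) := by
        have h5 : ((m i + 1 : ℤ) : ℝ) ≤ (((2^d:ℤ) * (m' i + 1) : ℤ) : ℝ) := by exact_mod_cast i2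
        rw [hD]
        push_cast at h5 ⊢
        nlinarith [mul_le_mul_of_nonneg_left h5 h2.le]

lemma stdCube_subset_or (n : ℕ) {k k' : ℤ} {m m' : Fin n → ℤ}
    (h : (stdCube n k m ∩ stdCube n k' m').Nonempty) :
    stdCube n k m ⊆ stdCube n k' m' ∨ stdCube n k' m' ⊆ stdCube n k m := by
  rcases le_total k k' with hk | hk
  · exact Or.inl (stdCube_subset_of_le n hk h)
  · exact Or.inr (stdCube_subset_of_le n hk ⟨h.choose, h.choose_spec.2, h.choose_spec.1⟩)

lemma stdCube_subset_parent (n : ℕ) (k : ℤ) (m : Fin n → ℤ) :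
    stdCube n k m ⊆ stdCube n (k+1) (fun i => (m i) / 2) := by
  intro x hx i
  obtain ⟨ha, hb⟩ := hx i
  have h2 : (0:ℝ) < (2:ℝ)^k := zpow_pos (by norm_num) k
  have hq1 : 2 * ((m i) / 2) ≤ m i := by omega
  have hq2 : m i + 1 ≤ 2 * ((m i) / 2) + 2 := by omega
  have hk1 : (2:ℝ)^(k+1) = (2:ℝ)^k * 2 := by
    rw [zpow_add₀ (by norm_num : (2:ℝ) ≠ 0)]; norm_num
  have c1 : ((2 * ((m i) / 2) : ℤ) : ℝ) ≤ ((m i : ℤ) : ℝ) := by exact_mod_cast hq1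
  have c2 : ((m i + 1 : ℤ) : ℝ) ≤ ((2 * ((m i) / 2) + 2 : ℤ) : ℝ) := by exact_mod_cast hq2
  push_cast at c1 c2
  constructor
  · show (2:ℝ)^(k+1) * ((m i) / 2 : ℤ) ≤ x i
    rw [hk1]
    nlinarith [mul_le_mul_of_nonneg_left c1 h2.le]
  · show x i < (2:ℝ)^(k+1) * (((m i) / 2 : ℤ) + 1)
    rw [hk1]
    nlinarith [mul_le_mul_of_nonneg_left c2 h2.le]

/-- Stopping-time cubes form a sparse family.  With `c = 2^{(n+1)/p}` and `𝒮_k` a maximal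
disjoint collection of dyadic cubes with `‖g‖_{L^p,Q} > c^k`, for every cube `Q` of the
family `𝒮 = ⋃_k 𝒮_k` the union of the strictly smaller family cubes inside `Q` has
measure at most `|Q|/2`. -/
theorem stopping_cubes_sparse (n : ℕ) (p : ℝ) (hp : 1 < p)
    (g : (Fin n → ℝ) → ℝ) (hg : Measurable g)
    (hloc : ∀ (k : ℤ) (m : Fin n → ℤ),
      ∫⁻ x in stdCube n k m, ENNReal.ofReal |g x| ^ p < ⊤)
    (c : ℝ) (hc : c = 2 ^ ((n + 1 : ℝ) / p))
    (S : ℤ → Set (ℤ × (Fin n → ℤ)))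
    (hdisj : ∀ k, (S k).PairwiseDisjoint (fun q => stdCube n q.1 q.2))
    (hsel : ∀ k, ∀ q ∈ S k,
      ENNReal.ofReal (c ^ k) < normLp n p g (stdCube n q.1 q.2))
    (hmax : ∀ (k : ℤ) (q : ℤ × (Fin n → ℤ)),
      ENNReal.ofReal (c ^ k) < normLp n p g (stdCube n q.1 q.2) →
      ∃ q' ∈ S k, stdCube n q.1 q.2 ⊆ stdCube n q'.1 q'.2) :
    ∀ k, ∀ q ∈ S k,
      volume (⋃ q' ∈ {q' : ℤ × (Fin n → ℤ) |
          (∃ k', q' ∈ S k') ∧ stdCube n q'.1 q'.2 ⊂ stdCube n q.1 q.2},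
        stdCube n q'.1 q'.2) ≤ volume (stdCube n q.1 q.2) / 2 := by
  intro k q hq
  rcases Nat.eq_zero_or_pos n with hn | hn
  · -- degenerate case n = 0 : all cubes are `univ`, no strict inclusions
    subst hn
    have huniv : ∀ (k₀ : ℤ) (m₀ : Fin 0 → ℤ), stdCube 0 k₀ m₀ = univ := by
      intro k₀ m₀; ext x; simp [stdCube]
    have hempty : {q' : ℤ × (Fin 0 → ℤ) |
        (∃ k', q' ∈ S k') ∧ stdCube 0 q'.1 q'.2 ⊂ stdCube 0 q.1 q.2} = ∅ := by
      ext q'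
      simp only [mem_setOf_eq, mem_empty_iff_false, iff_false, not_and]
      intro _
      rw [huniv, huniv]
      exact fun h => ssubset_irrefl _ h
    rw [hempty]
    simp
  -- main case
  have hp0 : 0 < p := lt_trans one_pos hp
  have hpne : p ≠ 0 := hp0.ne'
  have hc0 : 0 < c := by rw [hc]; positivity
  have hc1 : 1 ≤ c := by
    rw [hc]
    calc (1:ℝ) = 2 ^ (0:ℝ) := (Real.rpow_zero 2).symm
    _ ≤ 2 ^ ((n+1:ℝ)/p) := Real.rpow_le_rpow_of_exponent_le (by norm_num)
        (div_nonneg (by positivity) hp0.le)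
  set f : (Fin n → ℝ) → ℝ≥0∞ := fun x => ENNReal.ofReal |g x| ^ p with hf
  have hfm : Measurable f := (ENNReal.measurable_ofReal.comp hg.abs).pow_const p
  set μ : Measure (Fin n → ℝ) := volume.withDensity f with hμ
  have hμ_apply : ∀ (k₀ : ℤ) (m₀ : Fin n → ℤ),
      μ (stdCube n k₀ m₀) = ∫⁻ x in stdCube n k₀ m₀, f x :=
    fun k₀ m₀ => withDensity_apply f (measurableSet_stdCube n k₀ m₀)
  have hnorm : ∀ (k₀ : ℤ) (m₀ : Fin n → ℤ),
      normLp n p g (stdCube n k₀ m₀)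
        = ((volume (stdCube n k₀ m₀))⁻¹ * μ (stdCube n k₀ m₀)) ^ (1/p) := by
    intro k₀ m₀; rw [normLp, hμ_apply]
  have hv : ∀ k₀ : ℤ, ENNReal.ofReal ((2:ℝ)^k₀) ≠ 0 ∧ ENNReal.ofReal ((2:ℝ)^k₀) ≠ ⊤ := by
    intro k₀
    refine ⟨?_, ENNReal.ofReal_ne_top⟩
    simp only [ne_eq, ENNReal.ofReal_eq_zero, not_le]
    exact zpow_pos (by norm_num) _
  have hvol0 : ∀ (k₀ : ℤ) (m₀ : Fin n → ℤ), volume (stdCube n k₀ m₀) ≠ 0 := by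
    intro k₀ m₀; rw [volume_stdCube]; exact pow_ne_zero _ (hv k₀).1
  have hvolt : ∀ (k₀ : ℤ) (m₀ : Fin n → ℤ), volume (stdCube n k₀ m₀) ≠ ⊤ := by
    intro k₀ m₀; rw [volume_stdCube]; exact ENNReal.pow_ne_top (hv k₀).2
  have eqOf : ∀ (k₀ : ℤ) {q₁ q₂ : ℤ × (Fin n → ℤ)}, q₁ ∈ S k₀ → q₂ ∈ S k₀ →
      stdCube n q₁.1 q₁.2 ⊆ stdCube n q₂.1 q₂.2 → q₁ = q₂ := by
    intro k₀ q₁ q₂ h₁ h₂ hsub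
    by_contra hne
    obtain ⟨x, hx⟩ := stdCube_nonempty n q₁.1 q₁.2
    exact Set.disjoint_left.mp (hdisj k₀ h₁ h₂ hne) hx (hsub hx)
  have hE : ∀ k₀ : ℤ, ENNReal.ofReal (c ^ k₀) ^ p ≠ 0 ∧ ENNReal.ofReal (c ^ k₀) ^ p ≠ ⊤ := by
    intro k₀
    have h1 : ENNReal.ofReal (c ^ k₀) ≠ 0 := by
      simp only [ne_eq, ENNReal.ofReal_eq_zero, not_le]; positivity
    exact ⟨(ENNReal.rpow_pos (h1.bot_lt) ENNReal.ofReal_ne_top).ne',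
      ENNReal.rpow_ne_top_of_nonneg hp0.le ENNReal.ofReal_ne_top⟩
  -- from selection: volume bound by `μ` measure
  have key_lt : ∀ (k₀ : ℤ) (q' : ℤ × (Fin n → ℤ)), q' ∈ S k₀ →
      volume (stdCube n q'.1 q'.2)
        ≤ μ (stdCube n q'.1 q'.2) / (ENNReal.ofReal (c ^ k₀) ^ p) := by
    intro k₀ q' hq'
    have h := hsel k₀ q' hq'
    rw [hnorm] at h
    have h2 : ENNReal.ofReal (c ^ k₀) ^ p
        ≤ (volume (stdCube n q'.1 q'.2))⁻¹ * μ (stdCube n q'.1 q'.2) := by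
      have h3 := ENNReal.rpow_le_rpow h.le hp0.le
      rwa [← ENNReal.rpow_mul, one_div_mul_cancel hpne, ENNReal.rpow_one] at h3
    rw [ENNReal.le_div_iff_mul_le (Or.inl (hE k₀).1) (Or.inl (hE k₀).2)]
    calc volume (stdCube n q'.1 q'.2) * (ENNReal.ofReal (c ^ k₀) ^ p)
        ≤ volume (stdCube n q'.1 q'.2)
            * ((volume (stdCube n q'.1 q'.2))⁻¹ * μ (stdCube n q'.1 q'.2)) :=
          mul_le_mul_right h2 _
      _ = μ (stdCube n q'.1 q'.2) := by
          rw [← mul_assoc, ENNReal.mul_inv_cancel (hvol0 _ _) (hvolt _ _), one_mul]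
  -- the parent bound
  have h21 : ∀ k₀ : ℤ, ENNReal.ofReal ((2:ℝ)^(k₀+1)) = 2 * ENNReal.ofReal ((2:ℝ)^k₀) := by
    intro k₀
    rw [zpow_add₀ (by norm_num : (2:ℝ) ≠ 0), zpow_one,
      ENNReal.ofReal_mul (by positivity : (0:ℝ) ≤ (2:ℝ)^k₀)]
    norm_num
    ring
  have hparent : μ (stdCube n (q.1+1) (fun i => (q.2 i) / 2))
      ≤ ENNReal.ofReal (c ^ k) ^ p * volume (stdCube n (q.1+1) (fun i => (q.2 i) / 2)) := by
    have hQP := stdCube_subset_parent n q.1 q.2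
    have hle : ¬ (ENNReal.ofReal (c ^ k)
        < normLp n p g (stdCube n (q.1+1) (fun i => (q.2 i) / 2))) := by
      intro hlt
      obtain ⟨q', hq'S, hsub⟩ := hmax k (q.1+1, fun i => (q.2 i) / 2) hlt
      have heq : q = q' := eqOf k hq hq'S (hQP.trans hsub)
      have hcubeq : stdCube n q'.1 q'.2 = stdCube n q.1 q.2 := by rw [heq]
      have hPQ : stdCube n (q.1+1) (fun i => (q.2 i) / 2) ⊆ stdCube n q.1 q.2 :=
        hsub.trans hcubeq.subset
      have hvol : volume (stdCube n (q.1+1) (fun i => (q.2 i) / 2))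
          ≤ volume (stdCube n q.1 q.2) := measure_mono hPQ
      rw [volume_stdCube, volume_stdCube, h21 q.1, mul_pow] at hvol
      have hle1 : (2:ℝ≥0∞)^n ≤ 1 := by
        have h5 : (2:ℝ≥0∞)^n * ENNReal.ofReal ((2:ℝ)^q.1)^n
            ≤ 1 * ENNReal.ofReal ((2:ℝ)^q.1)^n := by rw [one_mul]; exact hvol
        exact (ENNReal.mul_le_mul_iff_left (pow_ne_zero _ (hv q.1).1)
          (ENNReal.pow_ne_top (hv q.1).2)).mp h5
      have : (1:ℝ≥0∞) < 2^n := one_lt_pow₀ (by norm_num) hn.ne'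
      exact absurd hle1 (not_le.mpr this)
    have hle' := not_lt.mp hle
    rw [hnorm] at hle'
    have h1 : (volume (stdCube n (q.1+1) (fun i => (q.2 i) / 2)))⁻¹
        * μ (stdCube n (q.1+1) (fun i => (q.2 i) / 2)) ≤ ENNReal.ofReal (c ^ k) ^ p := by
      have h3 := ENNReal.rpow_le_rpow hle' hp0.le
      rwa [← ENNReal.rpow_mul, one_div_mul_cancel hpne, ENNReal.rpow_one] at h3
    calc μ (stdCube n (q.1+1) (fun i => (q.2 i) / 2))
        = volume (stdCube n (q.1+1) (fun i => (q.2 i) / 2))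
          * ((volume (stdCube n (q.1+1) (fun i => (q.2 i) / 2)))⁻¹
            * μ (stdCube n (q.1+1) (fun i => (q.2 i) / 2))) := by
          rw [← mul_assoc, ENNReal.mul_inv_cancel (hvol0 _ _) (hvolt _ _), one_mul]
      _ ≤ volume (stdCube n (q.1+1) (fun i => (q.2 i) / 2)) * ENNReal.ofReal (c ^ k) ^ p :=
          mul_le_mul_right h1 _
      _ = ENNReal.ofReal (c ^ k) ^ p * volume (stdCube n (q.1+1) (fun i => (q.2 i) / 2)) :=
          mul_comm _ _
  -- covering by level k+1 cubes
  set T : Set (ℤ × (Fin n → ℤ)) :=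
    {q' | q' ∈ S (k+1) ∧ stdCube n q'.1 q'.2 ⊆ stdCube n q.1 q.2} with hT
  have hcover : (⋃ q' ∈ {q' : ℤ × (Fin n → ℤ) |
        (∃ k', q' ∈ S k') ∧ stdCube n q'.1 q'.2 ⊂ stdCube n q.1 q.2}, stdCube n q'.1 q'.2)
      ⊆ ⋃ q' ∈ T, stdCube n q'.1 q'.2 := by
    intro x hx
    simp only [mem_iUnion, mem_setOf_eq, exists_prop] at hx ⊢
    obtain ⟨q', ⟨⟨k', hk'S⟩, hss⟩, hxq'⟩ := hx
    have hk1 : k + 1 ≤ k' := by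
      by_contra hcon
      push_neg at hcon
      have hk'k : k' ≤ k := by omega
      have hlt : ENNReal.ofReal (c ^ k') < normLp n p g (stdCube n q.1 q.2) :=
        lt_of_le_of_lt (ENNReal.ofReal_le_ofReal (zpow_le_zpow_right₀ hc1 hk'k)) (hsel k q hq)
      obtain ⟨r, hrS, hQr⟩ := hmax k' q hlt
      have heq : q' = r := eqOf k' hk'S hrS (hss.subset.trans hQr)
      exact hss.not_subset (by rw [heq]; exact hQr)
    have hlt : ENNReal.ofReal (c ^ (k+1)) < normLp n p g (stdCube n q'.1 q'.2) :=
      lt_of_le_of_lt (ENNReal.ofReal_le_ofReal (zpow_le_zpow_right₀ hc1 hk1)) (hsel k' q' hk'S)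
    obtain ⟨r, hrS, hsub⟩ := hmax (k+1) q' hlt
    have hne : (stdCube n r.1 r.2 ∩ stdCube n q.1 q.2).Nonempty :=
      ⟨x, hsub hxq', hss.subset hxq'⟩
    have hrQ : stdCube n r.1 r.2 ⊆ stdCube n q.1 q.2 := by
      rcases stdCube_subset_or n hne with h | h
      · exact h
      · have hlt2 : ENNReal.ofReal (c ^ k) < normLp n p g (stdCube n r.1 r.2) :=
          lt_of_le_of_lt (ENNReal.ofReal_le_ofReal
            (zpow_le_zpow_right₀ hc1 (by omega : k ≤ k+1))) (hsel (k+1) r hrS)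
        obtain ⟨s, hsS, hrs⟩ := hmax k r hlt2
        have heq : q = s := eqOf k hq hsS (h.trans hrs)
        rw [heq]; exact hrs
    exact ⟨r, ⟨hrS, hrQ⟩, hsub hxq'⟩
  refine le_trans (measure_mono hcover) ?_
  have hTc : T.Countable := Set.to_countable T
  have hTd : T.PairwiseDisjoint (fun q' => stdCube n q'.1 q'.2) :=
    (hdisj (k+1)).subset (fun q' hq' => hq'.1)
  have hTm : ∀ q' ∈ T, MeasurableSet (stdCube n q'.1 q'.2) :=
    fun q' _ => measurableSet_stdCube n _ _
  have hUsub : (⋃ q' ∈ T, stdCube n q'.1 q'.2) ⊆ stdCube n (q.1+1) (fun i => (q.2 i) / 2) :=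
    iUnion₂_subset (fun q' hq' => hq'.2.trans (stdCube_subset_parent n q.1 q.2))
  -- numeric constant
  have hcp : ENNReal.ofReal (c ^ (k+1)) ^ p
      = ENNReal.ofReal (c ^ k) ^ p * 2 ^ (n+1) := by
    have h1 : c ^ (k+1) = c ^ k * c := by rw [zpow_add₀ hc0.ne', zpow_one]
    have h2 : (c:ℝ) ^ p = 2 ^ (n+1) := by
      rw [hc, ← Real.rpow_mul (by norm_num : (0:ℝ) ≤ 2), div_mul_cancel₀ _ hpne]
      rw [show ((n:ℝ)+1) = ((n+1 : ℕ) : ℝ) by push_cast; ring, Real.rpow_natCast]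
    rw [h1, ENNReal.ofReal_mul (by positivity : (0:ℝ) ≤ c ^ k),
      ENNReal.mul_rpow_of_nonneg _ _ hp0.le,
      ENNReal.ofReal_rpow_of_pos hc0, h2, ENNReal.ofReal_pow (by norm_num)]
    norm_num
  have hvolP : volume (stdCube n (q.1+1) (fun i => (q.2 i) / 2))
      = 2^n * volume (stdCube n q.1 q.2) := by
    rw [volume_stdCube, volume_stdCube, h21 q.1, mul_pow]
  calc volume (⋃ q' ∈ T, stdCube n q'.1 q'.2)
      = ∑' (q' : T), volume (stdCube n (q':ℤ × (Fin n → ℤ)).1 (q':ℤ × (Fin n → ℤ)).2) :=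
        measure_biUnion hTc hTd hTm
    _ ≤ ∑' (q' : T), μ (stdCube n (q':ℤ × (Fin n → ℤ)).1 (q':ℤ × (Fin n → ℤ)).2)
          / (ENNReal.ofReal (c ^ (k+1)) ^ p) :=
        ENNReal.tsum_le_tsum (fun q' => key_lt (k+1) q' q'.2.1)
    _ = (∑' (q' : T), μ (stdCube n (q':ℤ × (Fin n → ℤ)).1 (q':ℤ × (Fin n → ℤ)).2))
          / (ENNReal.ofReal (c ^ (k+1)) ^ p) := by
        simp only [div_eq_mul_inv, ENNReal.tsum_mul_right]
    _ = μ (⋃ q' ∈ T, stdCube n q'.1 q'.2) / (ENNReal.ofReal (c ^ (k+1)) ^ p) := by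
        rw [measure_biUnion hTc hTd hTm]
    _ ≤ μ (stdCube n (q.1+1) (fun i => (q.2 i) / 2)) / (ENNReal.ofReal (c ^ (k+1)) ^ p) :=
        ENNReal.div_le_div_right (measure_mono hUsub) _
    _ ≤ (ENNReal.ofReal (c ^ k) ^ p * volume (stdCube n (q.1+1) (fun i => (q.2 i) / 2)))
          / (ENNReal.ofReal (c ^ (k+1)) ^ p) :=
        ENNReal.div_le_div_right hparent _
    _ = volume (stdCube n q.1 q.2) / 2 := by
        rw [hvolP, hcp]
        rw [show ENNReal.ofReal (c ^ k) ^ p * (2^n * volume (stdCube n q.1 q.2))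
            = (ENNReal.ofReal (c ^ k) ^ p * 2^n) * volume (stdCube n q.1 q.2) by ring,
          show ENNReal.ofReal (c ^ k) ^ p * 2^(n+1)
            = (ENNReal.ofReal (c ^ k) ^ p * 2^n) * 2 by rw [pow_succ]; ring]
        exact ENNReal.mul_div_mul_left _ _
          (mul_ne_zero (hE k).1 (pow_ne_zero _ (by norm_num)))
          (ENNReal.mul_ne_top (hE k).2 (ENNReal.pow_ne_top (by norm_num)))
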